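/- arXiv:1609.04330 — 2 statements merged into one kernel-verified Lean document; each statement's English description precedes it below -/
import Mathlib

section
/- Let p be an odd prime and A, B integers not divisible by p. Then the number of triples (x0, x1, x2) modulo p with x2 and (x0,x1) not both zero (i.e. x2 ≢ 0 mod p and (x0,x1) ≢ (0,0) mod p) satisfying A·x0² + B·x1² − x2² ≡ 0 mod p equals (p − 1)·(p − (−AB | p)), where (· | p) denotes the Legendre symbol. -/
/-!
Scaling by `x₂` identifies the solutions with `x₂ ≠ 0` with `𝔽ₚˣ ×` the affine conic
`A x² + B y² = 1`; the condition `(x₀, x₁) ≠ (0, 0)` is then automatic. Writing `χ` for the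
quadratic character, the equation `A x² = u` has `1 + χ(A u)` solutions, so the conic has
`∑ᵤ (1 + χ(A u)) (1 + χ(B (1 - u))) = p + χ(A B) J(χ, χ)` points, and the Jacobi sum is
`J(χ, χ) = J(χ, χ⁻¹) = -χ(-1)`.
-/

open Finset

section AddCount

variable {α β M : Type*} [Fintype α] [Fintype β] [AddCommGroup M] [Fintype M] [DecidableEq M]

lemma card_filter_add_eq (f : α → M) (g : β → M) (c : M) :
    #{v : α × β | f v.1 + g v.2 = c} = ∑ u : M, #{x | f x = u} * #{y | g y = c - u} := by
  rw [card_eq_sum_card_fiberwise (f := fun v => f v.1) (t := univ) (fun _ _ => mem_univ _)]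
  refine sum_congr rfl fun u _ => ?_
  rw [← card_product, ← filter_product, filter_filter, univ_product_univ]
  congr 1
  refine filter_congr fun v _ => ?_
  constructor
  · rintro ⟨h, rfl⟩; exact ⟨rfl, eq_sub_of_add_eq' h⟩
  · rintro ⟨rfl, h⟩; exact ⟨by rw [h, add_sub_cancel], rfl⟩

end AddCount

section FiniteField

variable {F : Type*} [Field F] [Fintype F] [DecidableEq F]

lemma quadraticChar_inv_apply (a : F) : quadraticChar F a⁻¹ = quadraticChar F a := by
  rw [← MulChar.inv_apply', (quadraticChar_isQuadratic F).inv]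

lemma card_filter_mul_sq_eq (hF : ringChar F ≠ 2) {a : F} (ha : a ≠ 0) (u : F) :
    (#{x : F | a * x ^ 2 = u} : ℤ) = quadraticChar F a * quadraticChar F u + 1 := by
  rw [← quadraticChar_inv_apply, ← map_mul, ← quadraticChar_card_sqrts hF, Set.toFinset_ofPred]
  simp only [eq_inv_mul_iff_mul_eq₀ ha]

lemma sum_quadraticChar_mul_quadraticChar_one_sub (hF : ringChar F ≠ 2) :
    ∑ u : F, quadraticChar F u * quadraticChar F (1 - u) = -quadraticChar F (-1) := by
  have h := jacobiSum_nontrivial_inv (quadraticChar_ne_one hF)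
  rwa [(quadraticChar_isQuadratic F).inv] at h

lemma sum_quadraticChar_one_sub (hF : ringChar F ≠ 2) :
    ∑ u : F, quadraticChar F (1 - u) = 0 :=
  ((Equiv.subLeft 1).sum_comp _).trans (quadraticChar_sum_zero hF)

lemma card_filter_mul_sq_add_mul_sq_eq_one (hF : ringChar F ≠ 2) {a b : F} (ha : a ≠ 0)
    (hb : b ≠ 0) :
    (#{v : F × F | a * v.1 ^ 2 + b * v.2 ^ 2 = 1} : ℤ)
      = Fintype.card F - quadraticChar F (-(a * b)) := by
  rw [card_filter_add_eq (fun x => a * x ^ 2) (fun y => b * y ^ 2)]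
  push_cast
  calc ∑ u : F, (#{x | a * x ^ 2 = u} : ℤ) * #{y | b * y ^ 2 = 1 - u}
      = ∑ u : F, (quadraticChar F a * quadraticChar F b *
            (quadraticChar F u * quadraticChar F (1 - u)) + quadraticChar F a * quadraticChar F u
          + quadraticChar F b * quadraticChar F (1 - u) + 1) :=
        sum_congr rfl fun u _ => by
          rw [card_filter_mul_sq_eq hF ha, card_filter_mul_sq_eq hF hb]; ring
    _ = quadraticChar F a * quadraticChar F b * -quadraticChar F (-1) + Fintype.card F := by
        simp only [sum_add_distrib, ← mul_sum, sum_quadraticChar_mul_quadraticChar_one_sub hF,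
          quadraticChar_sum_zero hF, sum_quadraticChar_one_sub hF, sum_const, card_univ,
          nsmul_eq_mul, mul_one, mul_zero, add_zero]
    _ = Fintype.card F - quadraticChar F (-(a * b)) := by
        rw [neg_eq_neg_one_mul (a * b), map_mul, map_mul]; ring

lemma card_filter_mul_sq_add_mul_sq_eq_sq (a b : F) :
    #{v : F × F × F | v.2.2 ≠ 0 ∧ a * v.1 ^ 2 + b * v.2.1 ^ 2 = v.2.2 ^ 2}
      = #{v : F × F | a * v.1 ^ 2 + b * v.2 ^ 2 = 1} * (Fintype.card F - 1) := by
  rw [← card_univ, ← card_erase_of_mem (mem_univ 0), ← filter_ne', ← card_product]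
  refine card_nbij' (fun v => ((v.1 / v.2.2, v.2.1 / v.2.2), v.2.2))
    (fun w => (w.1.1 * w.2, w.1.2 * w.2, w.2)) ?_ ?_ ?_ ?_
  · rintro ⟨x, y, z⟩ hv
    simp only [coe_filter, mem_univ, true_and, Set.mem_ofPred_eq, coe_product,
      Set.mem_prod] at hv ⊢
    obtain ⟨hz, h⟩ := hv
    refine ⟨?_, hz⟩
    field_simp
    exact h
  · rintro ⟨⟨x, y⟩, z⟩ hw
    simp only [coe_filter, mem_univ, true_and, Set.mem_ofPred_eq, coe_product,
      Set.mem_prod] at hw ⊢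
    obtain ⟨h, hz⟩ := hw
    exact ⟨hz, by linear_combination z ^ 2 * h⟩
  · rintro ⟨x, y, z⟩ hv
    simp only [coe_filter, mem_univ, true_and, Set.mem_ofPred_eq] at hv
    simp [div_mul_cancel₀ _ hv.1]
  · rintro ⟨⟨x, y⟩, z⟩ hw
    simp only [coe_filter, mem_univ, true_and, Set.mem_ofPred_eq, coe_product,
      Set.mem_prod] at hw
    simp [mul_div_cancel_right₀ _ hw.2]

end FiniteField

theorem stmt_0 (p : ℕ) [Fact p.Prime] (hp : p ≠ 2) (A B : ℤ)
    (hA : ¬ (p : ℤ) ∣ A) (hB : ¬ (p : ℤ) ∣ B) :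
    ((Finset.univ.filter (fun v : ZMod p × ZMod p × ZMod p =>
        v.2.2 ≠ 0 ∧ (v.1, v.2.1) ≠ (0, 0) ∧
        (A : ZMod p) * v.1 ^ 2 + (B : ZMod p) * v.2.1 ^ 2 - v.2.2 ^ 2 = 0)).card : ℤ)
      = ((p : ℤ) - 1) * ((p : ℤ) - legendreSym p (-(A * B))) := by
  have hF : ringChar (ZMod p) ≠ 2 := by rwa [ZMod.ringChar_zmod_n]
  have ha : (A : ZMod p) ≠ 0 := mt (ZMod.intCast_zmod_eq_zero_iff_dvd A p).mp hA
  have hb : (B : ZMod p) ≠ 0 := mt (ZMod.intCast_zmod_eq_zero_iff_dvd B p).mp hB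
  have hfilter : (univ.filter fun v : ZMod p × ZMod p × ZMod p =>
        v.2.2 ≠ 0 ∧ (v.1, v.2.1) ≠ (0, 0) ∧
        (A : ZMod p) * v.1 ^ 2 + (B : ZMod p) * v.2.1 ^ 2 - v.2.2 ^ 2 = 0)
      = univ.filter fun v : ZMod p × ZMod p × ZMod p =>
          v.2.2 ≠ 0 ∧ (A : ZMod p) * v.1 ^ 2 + (B : ZMod p) * v.2.1 ^ 2 = v.2.2 ^ 2 := by
    refine filter_congr fun ⟨x, y, z⟩ _ => ?_
    simp only [sub_eq_zero]
    refine and_congr_right fun hz => and_iff_right_of_imp fun h hxy => hz ?_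
    obtain ⟨rfl, rfl⟩ := Prod.mk.inj hxy
    simpa using h.symm
  rw [hfilter, card_filter_mul_sq_add_mul_sq_eq_sq, Nat.cast_mul,
    card_filter_mul_sq_add_mul_sq_eq_one hF ha hb, ZMod.card,
    Nat.cast_sub (Fact.out : p.Prime).one_le, legendreSym]
  push_cast
  ring
end

section
/- Let p be an odd prime, χ ∈ {−1, 1}, and v ≥ 1 an integer. Define σ by: σ = (1 − 1/p)·((1 + χ) + ((v−1)/2)·(1 − 1/p)·(1 + χ)) if v is odd, and σ = (1 − 1/p)·((1 + χ) + ((v−2)/2)·(1 − 1/p)·(1 + χ) + (1 − χ/p)) if v is even. Then (1 − 2/p)·Σ_{k=0}^{v} χ^k ≤ σ ≤ Σ_{k=0}^{v} χ^k. -/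
/-!
Writing `r = 1/p`, for `χ = -1` the density is `0` or `1 - r²` according to the parity of `v`,
and for `χ = 1` it is `2(1 - r) + (v - 1)(1 - r)²` for both parities. Against the geometric sums
`0`, `1` and `v + 1` the gaps to both bounds are `r(2 - r)`, `r²`, `r((2 - r) + v r)` and
`r(r + v(2 - r))`, all nonnegative as soon as `0 ≤ r ≤ 2`.
-/

open Finset

def localDensity (p : ℕ) (χ : ℚ) (v : ℕ) : ℚ :=
  if Odd v then
    (1 - 1 / (p : ℚ)) * ((1 + χ) + (((v : ℚ) - 1) / 2) * (1 - 1 / (p : ℚ)) * (1 + χ))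
  else
    (1 - 1 / (p : ℚ)) * ((1 + χ) + (((v : ℚ) - 2) / 2) * (1 - 1 / (p : ℚ)) * (1 + χ)
      + (1 - χ / (p : ℚ)))

lemma localDensity_one (p v : ℕ) :
    localDensity p 1 v = 2 * (1 - 1 / (p : ℚ)) + ((v : ℚ) - 1) * (1 - 1 / (p : ℚ)) ^ 2 := by
  unfold localDensity
  split_ifs <;> ring

lemma localDensity_neg_one (p v : ℕ) :
    localDensity p (-1) v = if Odd v then 0 else 1 - (1 / (p : ℚ)) ^ 2 := by
  unfold localDensity
  split_ifs <;> ring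

lemma sum_range_succ_neg_one_pow (v : ℕ) :
    ∑ k ∈ range (v + 1), (-1 : ℚ) ^ k = if Odd v then 0 else 1 := by
  rw [neg_one_geom_sum]
  simp only [Nat.even_add_one, Nat.not_even_iff_odd]

section

variable {r : ℚ}

lemma one_sub_two_mul_mul_le (hr0 : 0 ≤ r) (hr2 : r ≤ 2) (v : ℕ) :
    (1 - 2 * r) * ((v : ℚ) + 1) ≤ 2 * (1 - r) + ((v : ℚ) - 1) * (1 - r) ^ 2 := by
  have hgap : 0 ≤ r * ((2 - r) + v * r) := by
    have : 0 ≤ 2 - r := by linarith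
    positivity
  nlinarith

lemma two_mul_sub_add_mul_sq_le (hr0 : 0 ≤ r) (hr2 : r ≤ 2) (v : ℕ) :
    2 * (1 - r) + ((v : ℚ) - 1) * (1 - r) ^ 2 ≤ (v : ℚ) + 1 := by
  have hgap : 0 ≤ r * (r + v * (2 - r)) := by
    have : 0 ≤ 2 - r := by linarith
    positivity
  nlinarith

end

theorem localDensity_bounds (p : ℕ) {χ : ℚ} (hχ : χ = -1 ∨ χ = 1) (v : ℕ) :
    (1 - 2 / (p : ℚ)) * ∑ k ∈ range (v + 1), χ ^ k ≤ localDensity p χ v ∧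
      localDensity p χ v ≤ ∑ k ∈ range (v + 1), χ ^ k := by
  have hr0 : 0 ≤ 1 / (p : ℚ) := by positivity
  have hr2 : 1 / (p : ℚ) ≤ 2 := (one_div (p : ℚ) ▸ Nat.cast_inv_le_one p).trans one_le_two
  rw [div_eq_mul_one_div 2]
  rcases hχ with rfl | rfl
  · rw [localDensity_neg_one, sum_range_succ_neg_one_pow]
    split_ifs
    · simp
    · constructor <;> nlinarith
  · simp only [localDensity_one, one_pow, sum_const, card_range, nsmul_eq_mul, mul_one,
      Nat.cast_add, Nat.cast_one]
    exact ⟨one_sub_two_mul_mul_le hr0 hr2 v, two_mul_sub_add_mul_sq_le hr0 hr2 v⟩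

theorem stmt_6_general (p : ℕ) (χ : ℚ) (hχ : χ = -1 ∨ χ = 1)
    (v : ℕ) :
    (1 - 2 / (p : ℚ)) * (∑ k ∈ Finset.range (v + 1), χ ^ k) ≤
      (if Odd v then
        (1 - 1 / (p : ℚ)) * ((1 + χ) + (((v : ℚ) - 1) / 2) * (1 - 1 / (p : ℚ)) * (1 + χ))
      else
        (1 - 1 / (p : ℚ)) * ((1 + χ) + (((v : ℚ) - 2) / 2) * (1 - 1 / (p : ℚ)) * (1 + χ)
          + (1 - χ / (p : ℚ)))) ∧
    (if Odd v then
        (1 - 1 / (p : ℚ)) * ((1 + χ) + (((v : ℚ) - 1) / 2) * (1 - 1 / (p : ℚ)) * (1 + χ))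
      else
        (1 - 1 / (p : ℚ)) * ((1 + χ) + (((v : ℚ) - 2) / 2) * (1 - 1 / (p : ℚ)) * (1 + χ)
          + (1 - χ / (p : ℚ)))) ≤ ∑ k ∈ Finset.range (v + 1), χ ^ k :=
  localDensity_bounds p hχ v

theorem stmt_6 (p : ℕ) (hp : p.Prime) (hp2 : p ≠ 2) (χ : ℚ) (hχ : χ = -1 ∨ χ = 1)
    (v : ℕ) (hv : 1 ≤ v) :
    (1 - 2 / (p : ℚ)) * (∑ k ∈ Finset.range (v + 1), χ ^ k) ≤
      (if Odd v then
        (1 - 1 / (p : ℚ)) * ((1 + χ) + (((v : ℚ) - 1) / 2) * (1 - 1 / (p : ℚ)) * (1 + χ))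
      else
        (1 - 1 / (p : ℚ)) * ((1 + χ) + (((v : ℚ) - 2) / 2) * (1 - 1 / (p : ℚ)) * (1 + χ)
          + (1 - χ / (p : ℚ)))) ∧
    (if Odd v then
        (1 - 1 / (p : ℚ)) * ((1 + χ) + (((v : ℚ) - 1) / 2) * (1 - 1 / (p : ℚ)) * (1 + χ))
      else
        (1 - 1 / (p : ℚ)) * ((1 + χ) + (((v : ℚ) - 2) / 2) * (1 - 1 / (p : ℚ)) * (1 + χ)
          + (1 - χ / (p : ℚ)))) ≤ ∑ k ∈ Finset.range (v + 1), χ ^ k :=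
  stmt_6_general p χ hχ v
end
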